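/- arXiv:2511.22543 — 3 statements merged into one kernel-verified Lean document; each statement's English description precedes it below -/
import Mathlib

section
/- With notation as above, the line bundle O(a₁,...,a_s) on P^{n₁}×⋯×P^{n_s} (all n_i ≥ 1) is 0-regular — meaning K_t(a₁+k₁,...,a_s+k_s) = 0 for all t ≥ 1 and all (k₁,...,k_s) with k₁+⋯+k_s = -t and -n_j ≤ k_j ≤ 0 — if and only if a_i ≥ 0 for all i = 1,...,s. -/
open Finset

/-- dim H^i(ℙ^n, O(d)) -/
def hP (n i : ℕ) (d : ℤ) : ℕ :=
  if i = 0 ∧ 0 ≤ d then ((n : ℤ) + d).toNat.choose n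
  else if i = n ∧ 1 ≤ n ∧ d ≤ -(n : ℤ) - 1 then (-d - 1).toNat.choose n
  else 0

/-- Künneth dimension of H^t(ℙ^{n 0} × ⋯ × ℙ^{n (s-1)}, O(b 0, …, b (s-1))) -/
def KD (s : ℕ) (n : Fin s → ℕ) (t : ℕ) (b : Fin s → ℤ) : ℕ :=
  ∑ f ∈ (Fintype.piFinset fun _ : Fin s => Finset.range (t + 1)).filter
      (fun f => ∑ i, f i = t), ∏ i, hP (n i) (f i) (b i)

/-!
If every `aᵢ ≥ 0`, all twists `aᵢ + kᵢ` are `≥ -nᵢ`, where each factor `ℙ^{nᵢ}` has only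
`H⁰`, so no Künneth summand of positive degree survives. If some `aⱼ < 0`, twist every
negative `aᵢ` by `kᵢ = -nᵢ` and the others by `0`: then `aᵢ - nᵢ ≤ -nᵢ - 1` gives `H^{nᵢ} ≠ 0`
on the negative factors and `H⁰ ≠ 0` on the rest, a nonzero summand of degree `t = Σ nᵢ ≥ 1`.
-/

lemma hP_eq_zero_of_pos_of_neg_le {n i : ℕ} {d : ℤ} (hi : 0 < i) (hd : -(n : ℤ) ≤ d) :
    hP n i d = 0 := by
  unfold hP
  rw [if_neg (by omega), if_neg (by omega)]

lemma hP_zero_pos {n : ℕ} {d : ℤ} (hd : 0 ≤ d) : 0 < hP n 0 d := by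
  unfold hP
  rw [if_pos ⟨rfl, hd⟩]
  exact Nat.choose_pos (by omega)

lemma hP_self_pos {n : ℕ} {d : ℤ} (hn : 1 ≤ n) (hd : d ≤ -(n : ℤ) - 1) : 0 < hP n n d := by
  unfold hP
  rw [if_neg (by omega), if_pos ⟨rfl, hn, hd⟩]
  exact Nat.choose_pos (by omega)

lemma KD_eq_zero_of_forall_neg_le {s : ℕ} {n : Fin s → ℕ} {t : ℕ} {b : Fin s → ℤ}
    (ht : 0 < t) (hb : ∀ i, -(n i : ℤ) ≤ b i) : KD s n t b = 0 := by
  refine sum_eq_zero fun f hf => ?_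
  have hsum : ∑ i, f i = t := (mem_filter.mp hf).2
  obtain ⟨i, -, hfi⟩ : ∃ i ∈ univ, f i ≠ 0 := by
    by_contra! h
    rw [sum_eq_zero h] at hsum
    omega
  exact prod_eq_zero (mem_univ i) (hP_eq_zero_of_pos_of_neg_le (Nat.pos_of_ne_zero hfi) (hb i))

lemma KD_pos {s : ℕ} {n : Fin s → ℕ} {b : Fin s → ℤ} (f : Fin s → ℕ)
    (hf : ∀ i, 0 < hP (n i) (f i) (b i)) : 0 < KD s n (∑ i, f i) b := by
  have hmem : f ∈ (Fintype.piFinset fun _ : Fin s => range (∑ i, f i + 1)).filter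
      (fun g => ∑ i, g i = ∑ i, f i) := by
    refine mem_filter.mpr ⟨Fintype.mem_piFinset.mpr fun i => ?_, rfl⟩
    exact mem_range.mpr (Nat.lt_succ_of_le (single_le_sum (fun _ _ => Nat.zero_le _) (mem_univ i)))
  exact lt_of_lt_of_le (prod_pos fun i _ => hf i)
    (single_le_sum (f := fun g => ∏ i, hP (n i) (g i) (b i)) (fun _ _ => Nat.zero_le _) hmem)

lemma exists_KD_pos_of_neg {s : ℕ} {n : Fin s → ℕ} (hn : ∀ i, 1 ≤ n i) {a : Fin s → ℤ}
    {j : Fin s} (hj : a j < 0) :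
    ∃ (t : ℕ) (k : Fin s → ℤ), 1 ≤ t ∧ (∑ i, k i) = -(t : ℤ) ∧
      (∀ i, -(n i : ℤ) ≤ k i ∧ k i ≤ 0) ∧ 0 < KD s n t (fun i => a i + k i) := by
  set f : Fin s → ℕ := fun i => if a i < 0 then n i else 0
  refine ⟨∑ i, f i, fun i => -(f i : ℤ), ?_, by push_cast; exact sum_neg_distrib _, ?_, ?_⟩
  · calc 1 ≤ f j := by simp only [f, if_pos hj]; exact hn j
      _ ≤ ∑ i, f i := single_le_sum (fun _ _ => Nat.zero_le _) (mem_univ j)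
  · intro i
    by_cases hi : a i < 0 <;> simp [f, hi]
  · refine KD_pos f fun i => ?_
    by_cases hi : a i < 0
    · simp only [f, if_pos hi]
      exact hP_self_pos (hn i) (by omega)
    · simp only [f, if_neg hi]
      exact hP_zero_pos (by omega)

/-- O(a₁,…,a_s) is 0-regular iff all aᵢ ≥ 0. -/
theorem line_bundle_zero_regular_iff (s : ℕ) (n : Fin s → ℕ) (hn : ∀ i, 1 ≤ n i)
    (a : Fin s → ℤ) :
    (∀ (t : ℕ) (k : Fin s → ℤ), 1 ≤ t → (∑ i, k i) = -(t : ℤ) →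
        (∀ j, -(n j : ℤ) ≤ k j ∧ k j ≤ 0) → KD s n t (fun i => a i + k i) = 0) ↔
      ∀ i, 0 ≤ a i := by
  constructor
  · intro hreg
    by_contra! hneg
    obtain ⟨j, hj⟩ := hneg
    obtain ⟨t, k, ht, hsum, hk, hpos⟩ := exists_KD_pos_of_neg hn hj
    exact hpos.ne' (hreg t k ht hsum hk)
  · intro ha t k ht _ hk
    exact KD_eq_zero_of_forall_neg_le ht fun i => by linarith [(hk i).1, ha i]
end

section
/- For n ≥ 1 and integers u, v with |u - v| ≤ n, the line bundle O(u,v) on P^n × P^n satisfies K_i(c,d) = 0 for all i with 0 < i < 2n, i ≠ n, and all integers c, d with |c - d| ≤ 2n (in particular for twists of O(u,v) by O(ℓ₁,ℓ₂) with |ℓ₁ - ℓ₂| ≤ n), and K_n(u+ℓ, v+ℓ) = 0 for every ℓ ∈ ℤ. -/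
open Finset

lemma hP_ne (n i : ℕ) (d : ℤ) (h : hP n i d ≠ 0) :
    (i = 0 ∧ 0 ≤ d) ∨ (i = n ∧ d ≤ -(n : ℤ) - 1) := by
  unfold hP at h
  split_ifs at h with h1 h2
  · exact Or.inl h1
  · exact Or.inr ⟨h2.1, h2.2.2⟩
  · exact absurd rfl h

/-- 'Only if' direction of Lemma 1.4 on ℙ^n × ℙ^n at the line-bundle level. -/
theorem lemma14_only_if_PnPn (n : ℕ) (hn : 1 ≤ n) (u v : ℤ) (huv : |u - v| ≤ n) :
    (∀ (i : ℕ) (c d : ℤ), 0 < i → i ≠ n → i ≠ 2 * n → |c - d| ≤ 2 * n →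
        KD 2 ![n, n] i ![c, d] = 0) ∧
    (∀ ℓ : ℤ, KD 2 ![n, n] n ![u + ℓ, v + ℓ] = 0) := by
  have habs := abs_le.mp huv
  constructor
  · intro i c d hi hin hi2n _
    unfold KD
    apply Finset.sum_eq_zero
    intro f hf
    simp only [Finset.mem_filter] at hf
    have hsum : f 0 + f 1 = i := by
      have := hf.2; simpa [Fin.sum_univ_two] using this
    rw [Fin.prod_univ_two]
    simp only [Matrix.cons_val_zero, Matrix.cons_val_one, Matrix.head_cons]
    by_contra h
    have h0 : hP n (f 0) c ≠ 0 := fun hz => h (by simp [hz])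
    have h1 : hP n (f 1) d ≠ 0 := fun hz => h (by simp [hz])
    rcases hP_ne _ _ _ h0 with ⟨e0, _⟩ | ⟨e0, _⟩ <;>
      rcases hP_ne _ _ _ h1 with ⟨e1, _⟩ | ⟨e1, _⟩ <;> omega
  · intro ℓ
    unfold KD
    apply Finset.sum_eq_zero
    intro f hf
    simp only [Finset.mem_filter] at hf
    have hsum : f 0 + f 1 = n := by
      have := hf.2; simpa [Fin.sum_univ_two] using this
    rw [Fin.prod_univ_two]
    simp only [Matrix.cons_val_zero, Matrix.cons_val_one, Matrix.head_cons]
    by_contra h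
    have h0 : hP n (f 0) (u + ℓ) ≠ 0 := fun hz => h (by simp [hz])
    have h1 : hP n (f 1) (v + ℓ) ≠ 0 := fun hz => h (by simp [hz])
    rcases hP_ne _ _ _ h0 with ⟨e0, s0⟩ | ⟨e0, s0⟩ <;>
      rcases hP_ne _ _ _ h1 with ⟨e1, s1⟩ | ⟨e1, s1⟩ <;> omega
end

section
/- Nonvanishing window for the n₁-th cohomology under diagonal twist: let s ≥ 2, n₁ < n_k for k ≥ 2, and fix integers a₁,...,a_s and j₁,...,j_s. There exists an integer t with K_{n₁}(j₁+t+a₁, ..., j_s+t+a_s) ≠ 0 if and only if max_{k≥2}(-j_k - a_k) ≤ -n₁ - j₁ - a₁ - 1, and in that case the set of such t is exactly the interval [max_{k≥2}(-j_k-a_k), -n₁-j₁-a₁-1]. -/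
open Finset

lemma hP_ne_zero (n i : ℕ) (d : ℤ) :
    hP n i d ≠ 0 ↔ (i = 0 ∧ 0 ≤ d) ∨ (i = n ∧ 1 ≤ n ∧ d ≤ -(n : ℤ) - 1) := by
  unfold hP
  split_ifs with h1 h2
  · have hle : n ≤ ((n : ℤ) + d).toNat := by omega
    exact ⟨fun _ => Or.inl h1, fun _ => (Nat.choose_pos hle).ne'⟩
  · have hle : n ≤ (-d - 1).toNat := by omega
    exact ⟨fun _ => Or.inr h2, fun _ => (Nat.choose_pos hle).ne'⟩
  · constructor
    · intro h; exact absurd rfl h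
    · rintro (h | h)
      · exact absurd h h1
      · exact absurd h h2

lemma KD_ne_zero_iff (s : ℕ) (n : Fin (s + 2) → ℕ) (hn : ∀ i, 1 ≤ n i)
    (hlt : ∀ k, k ≠ 0 → n 0 < n k) (b : Fin (s + 2) → ℤ) :
    KD (s + 2) n (n 0) b ≠ 0 ↔
      (b 0 ≤ -(n 0 : ℤ) - 1 ∧ ∀ k, k ≠ 0 → 0 ≤ b k) := by
  classical
  set g : Fin (s + 2) → ℕ := fun i => if i = 0 then n 0 else 0 with hg
  have hgsum : ∑ i, g i = n 0 := by
    rw [hg]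
    simp [Finset.sum_ite_eq']
  have hgmem : g ∈ (Fintype.piFinset fun _ : Fin (s + 2) => Finset.range (n 0 + 1)).filter
      (fun f => ∑ i, f i = n 0) := by
    rw [Finset.mem_filter]
    refine ⟨?_, hgsum⟩
    rw [Fintype.mem_piFinset]
    intro i
    rw [Finset.mem_range, hg]
    dsimp only
    split <;> omega
  have hKD : KD (s + 2) n (n 0) b = ∏ i, hP (n i) (g i) (b i) := by
    unfold KD
    apply Finset.sum_eq_single_of_mem g hgmem
    intro f hf hne
    by_contra hprod
    apply hne
    have hprod' : ∀ i ∈ Finset.univ, hP (n i) (f i) (b i) ≠ 0 :=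
      Finset.prod_ne_zero_iff.mp hprod
    rw [Finset.mem_filter] at hf
    have hsum : ∑ i, f i = n 0 := hf.2
    have hzero : ∀ k, k ≠ 0 → f k = 0 := by
      intro k hk
      have hle : f k ≤ n 0 := hsum ▸ Finset.single_le_sum
        (fun i _ => Nat.zero_le (f i)) (Finset.mem_univ k)
      rcases (hP_ne_zero (n k) (f k) (b k)).mp (hprod' k (Finset.mem_univ k)) with h | h
      · exact h.1
      · have := hlt k hk; omega
    funext i
    rw [hg]
    dsimp only
    by_cases hi : i = 0
    · rw [if_pos hi]
      subst hi
      have : ∑ x, f x = f 0 := Finset.sum_eq_single 0 (fun k _ hk => hzero k hk)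
        (fun h => absurd (Finset.mem_univ 0) h)
      omega
    · rw [if_neg hi]
      exact hzero i hi
  rw [hKD, ne_eq, Finset.prod_eq_zero_iff]
  push_neg
  constructor
  · intro h
    constructor
    · have h0 := (hP_ne_zero (n 0) (g 0) (b 0)).mp (h 0 (Finset.mem_univ 0))
      have hg0 : g 0 = n 0 := by rw [hg]; simp
      rw [hg0] at h0
      have := hn 0
      rcases h0 with h0 | h0
      · omega
      · exact h0.2.2
    · intro k hk
      have hk0 := (hP_ne_zero (n k) (g k) (b k)).mp (h k (Finset.mem_univ k))
      have hgk : g k = 0 := by rw [hg]; simp [hk]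
      rw [hgk] at hk0
      have := hn k
      rcases hk0 with h0 | h0
      · exact h0.2
      · omega
  · rintro ⟨h0, hk⟩ i _
    rw [hP_ne_zero]
    by_cases hi : i = 0
    · subst hi
      have hg0 : g 0 = n 0 := by rw [hg]; simp
      rw [hg0]
      exact Or.inr ⟨rfl, hn 0, h0⟩
    · have hgk : g i = 0 := by rw [hg]; simp [hi]
      rw [hgk]
      exact Or.inl ⟨rfl, hk i hi⟩

/-- Nonvanishing window for the n₁-th cohomology under diagonal twist. -/
theorem n1_cohomology_window (s : ℕ) (n : Fin (s + 2) → ℕ) (hn : ∀ i, 1 ≤ n i)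
    (hlt : ∀ k, k ≠ 0 → n 0 < n k) (a j : Fin (s + 2) → ℤ) :
    ((∃ t : ℤ, KD (s + 2) n (n 0) (fun m => j m + t + a m) ≠ 0) ↔
      ∀ k, k ≠ 0 → -(j k) - a k ≤ -(n 0 : ℤ) - j 0 - a 0 - 1) ∧
    (∀ t : ℤ, KD (s + 2) n (n 0) (fun m => j m + t + a m) ≠ 0 ↔
      (∀ k, k ≠ 0 → -(j k) - a k ≤ t) ∧ t ≤ -(n 0 : ℤ) - j 0 - a 0 - 1) := by
  have key : ∀ t : ℤ, KD (s + 2) n (n 0) (fun m => j m + t + a m) ≠ 0 ↔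
      (∀ k, k ≠ 0 → -(j k) - a k ≤ t) ∧ t ≤ -(n 0 : ℤ) - j 0 - a 0 - 1 := by
    intro t
    rw [KD_ne_zero_iff s n hn hlt]
    constructor
    · rintro ⟨h0, hk⟩
      exact ⟨fun k hk' => by have := hk k hk'; omega, by omega⟩
    · rintro ⟨hk, h0⟩
      exact ⟨by omega, fun k hk' => by have := hk k hk'; omega⟩
  refine ⟨?_, key⟩
  constructor
  · rintro ⟨t, ht⟩ k hk
    rw [key] at ht
    have := ht.1 k hk
    have := ht.2
    omega
  · intro h
    refine ⟨-(n 0 : ℤ) - j 0 - a 0 - 1, ?_⟩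
    rw [key]
    exact ⟨fun k hk => h k hk, le_refl _⟩
end
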